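/- Smoothness of AllocationScaledGreedy in terms of recommendation quality: with the setup of the AllocationScaledGreedy mechanism (weights r_{ij} = 1 if â(j)=i, else n/β, and each job assigned to a minimizer of r_{ij}t_{ij}), the mechanism's makespan is at most (β+1)·C(t, â), where C(t, â) is the makespan of the recommended assignment â. Consequently the approximation ratio is at most (β+1)·ρ̂ where ρ̂ = C(t, â)/OPT. -/

import Mathlib

/-!
A job that the mechanism moves away from its recommended machine `â j` is cheap where it lands:
minimality of the weighted time against `â j` gives `t i j ≤ (β / n) · t (â j) j`. So machine `i`
carries its own recommended jobs, of total time at most `C(t, â)`, plus displaced jobs whose total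
time is at most `β / n` times the whole recommended work `∑ⱼ t (â j) j ≤ n · C(t, â)`.
-/

open Finset

section Makespan

variable {ι κ : Type*} [Fintype ι] [DecidableEq ι] [Fintype κ]

def load (t : ι → κ → ℝ) (σ : κ → ι) (i : ι) : ℝ :=
  ∑ j ∈ univ.filter (fun j => σ j = i), t i j

def makespan (hne : (univ : Finset ι).Nonempty) (t : ι → κ → ℝ) (σ : κ → ι) : ℝ :=
  univ.sup' hne (load t σ)

theorem load_le_makespan (hne : (univ : Finset ι).Nonempty) (t : ι → κ → ℝ) (σ : κ → ι)
    (i : ι) : load t σ i ≤ makespan hne t σ :=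
  le_sup' (load t σ) (mem_univ i)

theorem sum_assigned_eq_sum_load (t : ι → κ → ℝ) (σ : κ → ι) :
    ∑ j, t (σ j) j = ∑ i, load t σ i := by
  rw [← sum_fiberwise univ σ (fun j => t (σ j) j)]
  refine sum_congr rfl fun i _ => sum_congr rfl fun j hj => ?_
  rw [(mem_filter.mp hj).2]

theorem sum_assigned_le_card_mul_makespan (hne : (univ : Finset ι).Nonempty)
    (t : ι → κ → ℝ) (σ : κ → ι) :
    ∑ j, t (σ j) j ≤ Fintype.card ι * makespan hne t σ := by
  rw [sum_assigned_eq_sum_load]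
  calc ∑ i, load t σ i ≤ ∑ _i : ι, makespan hne t σ :=
        sum_le_sum fun i _ => load_le_makespan hne t σ i
    _ = Fintype.card ι * makespan hne t σ := by rw [sum_const, card_univ, nsmul_eq_mul]

end Makespan

section ScaledGreedy

variable {ι κ : Type*} [Fintype ι] [DecidableEq ι]
  {t : ι → κ → ℝ} {β : ℝ} {ahat : κ → ι} {r : ι → κ → ℝ} {ij : κ → ι}

theorem le_div_card_mul_of_ne_recommended (hne : (univ : Finset ι).Nonempty) (hβ : 0 < β)
    (hr : ∀ i j, r i j = if ahat j = i then 1 else (Fintype.card ι : ℝ) / β)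
    (hmin : ∀ j i, r (ij j) j * t (ij j) j ≤ r i j * t i j) {j : κ} (hj : ahat j ≠ ij j) :
    t (ij j) j ≤ β / Fintype.card ι * t (ahat j) j := by
  have hcard : (0 : ℝ) < Fintype.card ι := Nat.cast_pos.mpr (card_pos.mpr hne)
  have h := hmin j (ahat j)
  rw [hr, hr, if_neg hj, if_pos rfl, one_mul, div_mul_eq_mul_div, div_le_iff₀ hβ] at h
  rw [div_mul_eq_mul_div, le_div_iff₀ hcard]
  linarith

theorem load_le_of_scaled_greedy [Fintype κ] (hne : (univ : Finset ι).Nonempty)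
    (ht : ∀ i j, 0 ≤ t i j) (hβ : 0 < β)
    (hr : ∀ i j, r i j = if ahat j = i then 1 else (Fintype.card ι : ℝ) / β)
    (hmin : ∀ j i, r (ij j) j * t (ij j) j ≤ r i j * t i j) (i : ι) :
    load t ij i ≤ (β + 1) * makespan hne t ahat := by
  set C := makespan hne t ahat
  set S := univ.filter (fun j => ij j = i)
  have hcard : (0 : ℝ) < Fintype.card ι := Nat.cast_pos.mpr (card_pos.mpr hne)
  have hkept : ∑ j ∈ S.filter (fun j => ahat j = i), t i j ≤ C := by
    refine le_trans (sum_le_sum_of_subset_of_nonneg ?_ fun j _ _ => ht i j)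
      (load_le_makespan hne t ahat i)
    intro j hj
    simp only [S, mem_filter, mem_univ, true_and] at hj ⊢
    exact hj.2
  have hmoved : ∑ j ∈ S.filter (fun j => ¬ahat j = i), t i j ≤ β * C := by
    have hcoef : 0 ≤ β / Fintype.card ι := by positivity
    calc ∑ j ∈ S.filter (fun j => ¬ahat j = i), t i j
        ≤ ∑ j ∈ S.filter (fun j => ¬ahat j = i), β / Fintype.card ι * t (ahat j) j := by
          refine sum_le_sum fun j hj => ?_
          simp only [S, mem_filter, mem_univ, true_and] at hj
          obtain ⟨rfl, hj⟩ := hj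
          exact le_div_card_mul_of_ne_recommended hne hβ hr hmin hj
      _ ≤ ∑ j, β / Fintype.card ι * t (ahat j) j :=
          sum_le_sum_of_subset_of_nonneg (subset_univ _) fun j _ _ =>
            mul_nonneg hcoef (ht _ _)
      _ = β / Fintype.card ι * ∑ j, t (ahat j) j := by rw [mul_sum]
      _ ≤ β / Fintype.card ι * (Fintype.card ι * C) :=
          mul_le_mul_of_nonneg_left (sum_assigned_le_card_mul_makespan hne t ahat) hcoef
      _ = β * C := by field_simp
  calc load t ij i
      = ∑ j ∈ S.filter (fun j => ahat j = i), t i j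
        + ∑ j ∈ S.filter (fun j => ¬ahat j = i), t i j :=
        (sum_filter_add_sum_filter_not _ _ _).symm
    _ ≤ C + β * C := add_le_add hkept hmoved
    _ = (β + 1) * C := by ring

theorem makespan_le_of_scaled_greedy [Fintype κ] (hne : (univ : Finset ι).Nonempty)
    (ht : ∀ i j, 0 ≤ t i j) (hβ : 0 < β)
    (hr : ∀ i j, r i j = if ahat j = i then 1 else (Fintype.card ι : ℝ) / β)
    (hmin : ∀ j i, r (ij j) j * t (ij j) j ≤ r i j * t i j) :
    makespan hne t ij ≤ (β + 1) * makespan hne t ahat :=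
  sup'_le _ _ fun i _ => load_le_of_scaled_greedy hne ht hβ hr hmin i

end ScaledGreedy

theorem stmt_9_general (n m : ℕ) (hne : (Finset.univ : Finset (Fin n)).Nonempty)
    (t : Fin n → Fin m → ℝ) (ht : ∀ i j, 0 ≤ t i j)
    (β : ℝ) (hβ1 : 1 ≤ β)
    (ahat : Fin m → Fin n)
    (r : Fin n → Fin m → ℝ)
    (hr : ∀ i j, r i j = if ahat j = i then 1 else (n : ℝ) / β)
    (ij : Fin m → Fin n) (hmin : ∀ j i, r (ij j) j * t (ij j) j ≤ r i j * t i j)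
    (OPT : ℝ)
    (hpos : 0 < OPT)
    (ρ : ℝ)
    (hρ : ρ = (Finset.univ.sup' hne
      (fun i => ∑ j ∈ Finset.univ.filter (fun j => ahat j = i), t i j)) / OPT) :
    Finset.univ.sup' hne (fun i => ∑ j ∈ Finset.univ.filter (fun j => ij j = i), t i j)
      ≤ (β + 1) *
        Finset.univ.sup' hne (fun i => ∑ j ∈ Finset.univ.filter (fun j => ahat j = i), t i j) ∧
    Finset.univ.sup' hne (fun i => ∑ j ∈ Finset.univ.filter (fun j => ij j = i), t i j) / OPT
      ≤ (β + 1) * ρ := by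
  have hbound : makespan hne t ij ≤ (β + 1) * makespan hne t ahat :=
    makespan_le_of_scaled_greedy hne ht (by linarith) (by simpa using hr) hmin
  refine ⟨hbound, ?_⟩
  rw [hρ, ← mul_div_assoc]
  exact div_le_div_of_nonneg_right hbound hpos.le

/-- Smoothness of AllocationScaledGreedy: the mechanism's makespan is at most
    (β+1)·C(t,â), hence its approximation ratio is at most (β+1)·ρ̂. -/
theorem stmt_9 (n m : ℕ) (hne : (Finset.univ : Finset (Fin n)).Nonempty)
    (t : Fin n → Fin m → ℝ) (ht : ∀ i j, 0 ≤ t i j)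
    (β : ℝ) (hβ1 : 1 ≤ β) (hβn : β ≤ n)
    (ahat : Fin m → Fin n)
    (r : Fin n → Fin m → ℝ)
    (hr : ∀ i j, r i j = if ahat j = i then 1 else (n : ℝ) / β)
    (ij : Fin m → Fin n) (hmin : ∀ j i, r (ij j) j * t (ij j) j ≤ r i j * t i j)
    (σstar : Fin m → Fin n)
    (hopt : ∀ σ : Fin m → Fin n,
      Finset.univ.sup' hne (fun i => ∑ j ∈ Finset.univ.filter (fun j => σstar j = i), t i j)
        ≤ Finset.univ.sup' hne (fun i => ∑ j ∈ Finset.univ.filter (fun j => σ j = i), t i j))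
    (OPT : ℝ)
    (hOPT : OPT = Finset.univ.sup' hne
      (fun i => ∑ j ∈ Finset.univ.filter (fun j => σstar j = i), t i j))
    (hpos : 0 < OPT)
    (ρ : ℝ)
    (hρ : ρ = (Finset.univ.sup' hne
      (fun i => ∑ j ∈ Finset.univ.filter (fun j => ahat j = i), t i j)) / OPT) :
    Finset.univ.sup' hne (fun i => ∑ j ∈ Finset.univ.filter (fun j => ij j = i), t i j)
      ≤ (β + 1) *
        Finset.univ.sup' hne (fun i => ∑ j ∈ Finset.univ.filter (fun j => ahat j = i), t i j) ∧
    Finset.univ.sup' hne (fun i => ∑ j ∈ Finset.univ.filter (fun j => ij j = i), t i j) / OPT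
      ≤ (β + 1) * ρ :=
  stmt_9_general n m hne t ht β hβ1 ahat r hr ij hmin OPT hpos ρ hρ
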